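/- Zero reachability probability characterises absence of paths: let P be the transition function of a finite MC over finite nonempty state type S, let G ⊆ S, and let s be a state. Then Prob_P(s,G) = 0 if and only if s has no path to G under P, i.e., s ∈ B_P(G). -/

import Mathlib

/-! For `s ∉ G`, `Pr_P^{n+1}(s, G) > 0` iff some `t` with `P s t > 0` has `Pr_P^n(t, G) > 0`,
so some `Pr_P^n(s, G)` is positive exactly when `s` has a path to `G`. Since all `Pr_P^n(s, G)`
lie in `[0, 1]`, their supremum vanishes iff every one of them does. -/

open scoped Classical BigOperators

/-- `n`-step reachability probability `Pr_P^n(s, G)`. -/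
noncomputable def Pr {S : Type*} [Fintype S] (P : S → S → ℝ) : ℕ → S → Set S → ℝ
  | 0, s, G => if s ∈ G then 1 else 0
  | n + 1, s, G => if s ∈ G then 1 else ∑ t, P s t * Pr P n t G

/-- Reachability probability `Prob_P(s, G) = ⨆ n, Pr_P^n(s, G)`. -/
noncomputable def Prob {S : Type*} [Fintype S] (P : S → S → ℝ) (s : S) (G : Set S) : ℝ :=
  ⨆ n : ℕ, Pr P n s G

/-- `C`-restriction of `P`: states outside `C` are made absorbing. -/
noncomputable def restrictMC {S : Type*} (C : Set S) (P : S → S → ℝ) (s t : S) : ℝ :=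
  if s ∈ C then P s t else (if t = s then 1 else 0)

/-- `n`-step probability of reaching `B` while avoiding `G`. -/
noncomputable def APr {S : Type*} [Fintype S] (P : S → S → ℝ) : ℕ → S → Set S → Set S → ℝ
  | 0, s, B, _ => if s ∈ B then 1 else 0
  | n + 1, s, B, G => if s ∈ B then 1 else if s ∈ G then 0 else ∑ t, P s t * APr P n t B G

/-- `AProb_P(s, B, G) = ⨆ n, APr_P^n(s, B, G)`. -/
noncomputable def AProb {S : Type*} [Fintype S] (P : S → S → ℝ) (s : S) (B G : Set S) : ℝ :=
  ⨆ n : ℕ, APr P n s B G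

/-- `s` has a path to `G` under `P`. -/
def HasPathTo {S : Type*} (P : S → S → ℝ) (s : S) (G : Set S) : Prop :=
  ∃ (m : ℕ) (u : ℕ → S), u 0 = s ∧ (∀ i < m, 0 < P (u i) (u (i + 1))) ∧ u m ∈ G

/-- `B_P(G)`: the set of states with no path to `G` under `P`. -/
def BSet {S : Type*} (P : S → S → ℝ) (G : Set S) : Set S :=
  {s | ¬ HasPathTo P s G}

/-- Transition function `P_r` of the instantiated MC `D_r` of a family `𝔓`. -/
noncomputable def Pinst {S K : Type*} [Fintype K] (𝔓 : S → K → ℝ) (r : K → S) (s t : S) : ℝ :=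
  ∑ k, if r k = t then 𝔓 s k else 0

/-- Parameter `k` occurs at some state of `C`. -/
def OccursIn {S K : Type*} (𝔓 : S → K → ℝ) (C : Set S) (k : K) : Prop :=
  ∃ s ∈ C, 0 < 𝔓 s k

/-- `u` is reachable from `s0` under `P`. -/
def ReachableFrom {S : Type*} (P : S → S → ℝ) (s0 u : S) : Prop :=
  ∃ (m : ℕ) (v : ℕ → S), v 0 = s0 ∧ (∀ i < m, 0 < P (v i) (v (i + 1))) ∧ v m = u

section
variable {S : Type*} {P : S → S → ℝ} {G : Set S} {s t : S}

lemma HasPathTo.of_mem (hs : s ∈ G) : HasPathTo P s G :=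
  ⟨0, fun _ => s, rfl, fun _ hi => absurd hi (Nat.not_lt_zero _), hs⟩

lemma HasPathTo.cons (hst : 0 < P s t) (h : HasPathTo P t G) : HasPathTo P s G := by
  obtain ⟨m, u, rfl, hstep, hG⟩ := h
  refine ⟨m + 1, Nat.rec s fun i _ => u i, rfl, ?_, hG⟩
  rintro (_ | i) hi
  · exact hst
  · exact hstep i (by omega)

variable [Fintype S]

lemma Pr_nonneg (hP0 : ∀ s t, 0 ≤ P s t) (n : ℕ) (s : S) : 0 ≤ Pr P n s G := by
  induction n generalizing s with
  | zero => unfold Pr; split_ifs <;> norm_num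
  | succ n ih =>
    unfold Pr; split_ifs
    · exact zero_le_one
    · exact Finset.sum_nonneg fun t _ => mul_nonneg (hP0 s t) (ih t)

lemma Pr_le_one (hP0 : ∀ s t, 0 ≤ P s t) (hP1 : ∀ s, ∑ t, P s t = 1) (n : ℕ) (s : S) :
    Pr P n s G ≤ 1 := by
  induction n generalizing s with
  | zero => unfold Pr; split_ifs <;> norm_num
  | succ n ih =>
    unfold Pr; split_ifs
    · exact le_rfl
    · calc ∑ t, P s t * Pr P n t G ≤ ∑ t, P s t * 1 :=
            Finset.sum_le_sum fun t _ => mul_le_mul_of_nonneg_left (ih t) (hP0 s t)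
        _ = 1 := by simp only [mul_one, hP1 s]

lemma Pr_pos_of_mem (hs : s ∈ G) (n : ℕ) : 0 < Pr P n s G := by
  cases n <;> simp [Pr, hs]

lemma Pr_succ_pos_iff (hP0 : ∀ s t, 0 ≤ P s t) (hs : s ∉ G) (n : ℕ) :
    0 < Pr P (n + 1) s G ↔ ∃ t, 0 < P s t ∧ 0 < Pr P n t G := by
  simp only [Pr, hs, if_false]
  have hterm (t : S) : 0 ≤ P s t * Pr P n t G := mul_nonneg (hP0 s t) (Pr_nonneg hP0 n t)
  simp only [Finset.sum_pos_iff_of_nonneg fun t _ => hterm t, Finset.mem_univ, true_and]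
  exact exists_congr fun t => ⟨fun h => ⟨pos_of_mul_pos_left h (Pr_nonneg hP0 n t),
    pos_of_mul_pos_right h (hP0 s t)⟩, fun h => mul_pos h.1 h.2⟩

lemma hasPathTo_iff_exists_Pr_pos (hP0 : ∀ s t, 0 ≤ P s t) :
    HasPathTo P s G ↔ ∃ n, 0 < Pr P n s G := by
  constructor
  · rintro ⟨m, u, rfl, hstep, hG⟩
    refine ⟨m, ?_⟩
    induction m generalizing u with
    | zero => exact Pr_pos_of_mem hG 0
    | succ m ih =>
      by_cases hu : u 0 ∈ G
      · exact Pr_pos_of_mem hu _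
      · exact (Pr_succ_pos_iff hP0 hu m).2
          ⟨u 1, hstep 0 m.succ_pos, ih (fun i => u (i + 1)) (fun i hi => hstep (i + 1) (by omega)) hG⟩
  · rintro ⟨n, hn⟩
    induction n generalizing s with
    | zero => exact .of_mem (by by_contra hs; simp [Pr, hs] at hn)
    | succ n ih =>
      by_cases hs : s ∈ G
      · exact .of_mem hs
      · obtain ⟨t, hst, ht⟩ := (Pr_succ_pos_iff hP0 hs n).1 hn
        exact (ih ht).cons hst

lemma Prob_eq_zero_iff (hP0 : ∀ s t, 0 ≤ P s t) (hP1 : ∀ s, ∑ t, P s t = 1) :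
    Prob P s G = 0 ↔ ∀ n, Pr P n s G ≤ 0 := by
  have hbdd : BddAbove (Set.range fun n => Pr P n s G) :=
    ⟨1, Set.forall_mem_range.2 fun n => Pr_le_one hP0 hP1 n s⟩
  rw [← ciSup_le_iff hbdd, Prob]
  exact ⟨le_of_eq, fun h => h.antisymm (Real.iSup_nonneg fun n => Pr_nonneg hP0 n s)⟩

end

theorem stmt_10_general {S : Type*} [Fintype S] (P : S → S → ℝ)
    (hP0 : ∀ s t, 0 ≤ P s t) (hP1 : ∀ s, ∑ t, P s t = 1)
    (G : Set S) (s : S) :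
    Prob P s G = 0 ↔ s ∈ BSet P G := by
  rw [Prob_eq_zero_iff hP0 hP1, BSet, Set.mem_ofPred_eq, hasPathTo_iff_exists_Pr_pos hP0]
  push Not
  rfl

/-- zero reachability probability characterises absence of paths. -/
theorem stmt_10 {S : Type*} [Fintype S] [Nonempty S] (P : S → S → ℝ)
    (hP0 : ∀ s t, 0 ≤ P s t) (hP1 : ∀ s, ∑ t, P s t = 1)
    (G : Set S) (s : S) :
    Prob P s G = 0 ↔ s ∈ BSet P G :=
  stmt_10_general P hP0 hP1 G s
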